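/- arXiv:1910.02446 — 4 statements merged into one kernel-verified Lean document; each statement's English description precedes it below -/
import Mathlib

section
/- Let F be the class consisting of the single frame ({w,u}, ∅) with empty accessibility relation. Then F is not closed under point-generated subframes, yet for all modal formulas Γ ∪ {φ}, φ is a global consequence of Γ with respect to F if and only if φ is a local consequence of □^ωΓ with respect to F. -/
/-- Formulas of the basic modal language. -/
inductive Form : Type where
  | var : ℕ → Form
  | bot : Form
  | imp : Form → Form → Form
  | box : Form → Form

def Form.neg (φ : Form) : Form := .imp φ .bot
def Form.dia (φ : Form) : Form := .neg (.box (.neg φ))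
def Form.or (φ ψ : Form) : Form := .imp (.neg φ) ψ
def Form.and (φ ψ : Form) : Form := .neg (.imp φ (.neg ψ))

/-- A Kripke frame: a nonempty set of worlds with an accessibility relation. -/
structure Frame : Type 1 where
  W : Type
  R : W → W → Prop
  nonempty : Nonempty W

/-- Truth at a world of a model. -/
def Frame.sat (F : Frame) (V : ℕ → F.W → Prop) : F.W → Form → Prop
  | w, .var n => V n w
  | _, .bot => False
  | w, .imp φ ψ => F.sat V w φ → F.sat V w ψ
  | w, .box φ => ∀ u, F.R w u → F.sat V u φ

/-- Local consequence with respect to a class of frames. -/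
def localConseq (C : Frame → Prop) (Γ : Set Form) (φ : Form) : Prop :=
  ∀ F, C F → ∀ V : ℕ → F.W → Prop, ∀ w : F.W,
    (∀ ψ ∈ Γ, F.sat V w ψ) → F.sat V w φ

/-- Global consequence with respect to a class of frames. -/
def globalConseq (C : Frame → Prop) (Γ : Set Form) (φ : Form) : Prop :=
  ∀ F, C F → ∀ V : ℕ → F.W → Prop,
    (∀ ψ ∈ Γ, ∀ w : F.W, F.sat V w ψ) → ∀ w : F.W, F.sat V w φ

/-- □ⁿφ -/
def boxIter : ℕ → Form → Form
  | 0, φ => φ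
  | n+1, φ => .box (boxIter n φ)

/-- ◇ⁿφ -/
def diaIter : ℕ → Form → Form
  | 0, φ => φ
  | n+1, φ => .dia (diaIter n φ)

/-- □^ωΓ = {□ⁿψ | n ∈ ℕ, ψ ∈ Γ} -/
def boxOmega (Γ : Set Form) : Set Form :=
  {χ | ∃ n ψ, ψ ∈ Γ ∧ χ = boxIter n ψ}

/-- The subframe of `F` generated by the point `w`. -/
def Frame.gen (F : Frame) (w : F.W) : Frame where
  W := {v : F.W // Relation.ReflTransGen F.R w v}
  R a b := F.R a.1 b.1
  nonempty := ⟨⟨w, Relation.ReflTransGen.refl⟩⟩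

/-- A class of frames is closed under point-generated subframes. -/
def closedGen (C : Frame → Prop) : Prop :=
  ∀ F, C F → ∀ w : F.W, C (F.gen w)

/-- Modal-free (purely propositional) formulas. -/
def modalFree : Form → Prop
  | .var _ => True
  | .bot => True
  | .imp φ ψ => modalFree φ ∧ modalFree ψ
  | .box _ => False

/-- The frame ({w,u}, ∅), with empty accessibility relation. -/
def F₁ : Frame where
  W := Bool
  R _ _ := False
  nonempty := ⟨true⟩

/-! In a frame without accessible worlds every box formula is vacuously true, so the truth of a
formula at a world depends only on which variables hold there. A model on `F₁` can thus be
replaced by the model that copies the valuation of one world to both, which makes the local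
hypotheses at that world global. Conversely, boxes preserve global truth in any frame. The
generated subframe of a point of `F₁` has a single world, so it is not `F₁`. -/

theorem Frame.sat_iff_of_forall_not_R {F : Frame} (hR : ∀ a b, ¬ F.R a b)
    {V V' : ℕ → F.W → Prop} {w w' : F.W}
    (hV : ∀ n, V' n w' ↔ V n w) (ψ : Form) : F.sat V' w' ψ ↔ F.sat V w ψ := by
  induction ψ with
  | var n => exact hV n
  | bot => exact Iff.rfl
  | imp φ ψ ihφ ihψ => exact imp_congr ihφ ihψ
  | box φ _ => exact ⟨fun _ u hu => absurd hu (hR w u), fun _ u hu => absurd hu (hR w' u)⟩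

theorem Frame.subsingleton_gen_of_forall_not_R {F : Frame} (hR : ∀ a b, ¬ F.R a b) (w : F.W) :
    Subsingleton (F.gen w).W :=
  ⟨fun ⟨a, ha⟩ ⟨b, hb⟩ => by
    rw [Relation.reflTransGen_iff_eq (hR w)] at ha hb
    subst ha hb
    rfl⟩

theorem Frame.sat_boxIter_of_forall_sat {F : Frame} {V : ℕ → F.W → Prop} {ψ : Form}
    (hψ : ∀ w, F.sat V w ψ) (n : ℕ) (w : F.W) : F.sat V w (boxIter n ψ) := by
  induction n generalizing w with
  | zero => exact hψ w
  | succ n ih => exact fun u _ => ih u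

theorem subset_boxOmega (Γ : Set Form) : Γ ⊆ boxOmega Γ :=
  fun ψ hψ => ⟨0, ψ, hψ, rfl⟩

theorem localConseq.mono {C : Frame → Prop} {Γ Δ : Set Form} {φ : Form} (hΓΔ : Γ ⊆ Δ)
    (h : localConseq C Γ φ) : localConseq C Δ φ :=
  fun F hF V w hΔ => h F hF V w fun ψ hψ => hΔ ψ (hΓΔ hψ)

theorem globalConseq_of_localConseq_boxOmega {C : Frame → Prop} {Γ : Set Form} {φ : Form}
    (h : localConseq C (boxOmega Γ) φ) : globalConseq C Γ φ := by
  intro F hF V hΓ w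
  apply h F hF V w
  rintro _ ⟨n, ψ, hψ, rfl⟩
  exact Frame.sat_boxIter_of_forall_sat (hΓ ψ hψ) n w

theorem F₁.forall_not_R : ∀ a b, ¬ F₁.R a b :=
  fun _ _ => id

theorem localConseq_F₁_of_globalConseq {Γ : Set Form} {φ : Form}
    (h : globalConseq (· = F₁) Γ φ) : localConseq (· = F₁) Γ φ := by
  rintro F rfl V w hΓ
  have hconst (v : F₁.W) (ψ : Form) : F₁.sat (fun n _ => V n w) v ψ ↔ F₁.sat V w ψ :=
    Frame.sat_iff_of_forall_not_R F₁.forall_not_R (V' := fun n _ => V n w) (fun _ => Iff.rfl) ψ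
  rw [← hconst w]
  exact h F₁ rfl _ (fun ψ hψ v => (hconst v ψ).2 (hΓ ψ hψ)) w

theorem not_closedGen_eq_F₁ : ¬ closedGen (· = F₁) := by
  intro h
  have hsub := Frame.subsingleton_gen_of_forall_not_R F₁.forall_not_R true
  rw [h F₁ rfl true] at hsub
  exact absurd (hsub.elim true false) Bool.noConfusion

/-- a class of frames not closed under point-generated subframes
for which global consequence nevertheless equals local consequence from □^ωΓ. -/
theorem stmt5 :
    ¬ closedGen (· = F₁) ∧
    ∀ (Γ : Set Form) (φ : Form),
      globalConseq (· = F₁) Γ φ ↔ localConseq (· = F₁) (boxOmega Γ) φ :=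
  ⟨not_closedGen_eq_F₁, fun Γ _ =>
    ⟨fun h => (localConseq_F₁_of_globalConseq h).mono (subset_boxOmega Γ),
      globalConseq_of_localConseq_boxOmega⟩⟩
end

section
/- Let F be a class of transitive Kripke frames closed under point-generated subframes and under irreflexive point extension. Then for any modal formulas Γ ∪ {φ}: Γ ⊨^g_F φ if and only if □Γ ⊨_F □φ. -/
/-- Irreflexive point extension of `F` at `w` by a fresh point (`none`). -/
def Frame.ptext (F : Frame) (w : F.W) : Frame where
  W := Option F.W
  R a b := match a, b with
    | some x, some y => F.R x y
    | none, some y => y = w ∨ F.R w y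
    | _, none => False
  nonempty := ⟨none⟩

/-- A class of frames is closed under irreflexive point extension. -/
def closedPtext (C : Frame → Prop) : Prop :=
  ∀ F, C F → ∀ w : F.W, ¬ F.R w w → C (F.ptext w)

/-!
If `□Γ` holds at `w`, then by transitivity `Γ` holds throughout the subframe generated by
any successor `u` of `w`, so global consequence in that subframe yields `φ` at `u`.
Conversely, to obtain `φ` at a world `w` of a model where `Γ` holds globally, exhibit `w` as a
successor of a point at which `□Γ` holds: `w` itself if it is reflexive, and otherwise the fresh
irreflexive point of the extension at `w`, whose successors are all old worlds.
-/

theorem Relation.rel_of_rel_of_reflTransGen {α : Type*} {r : α → α → Prop} [IsTrans α r]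
    {a b c : α} (hab : r a b) (hbc : ReflTransGen r b c) : r a c :=
  transGen_eq_self (r := r) ▸ TransGen.head' hab hbc

namespace Frame

theorem sat_gen (F : Frame) (u : F.W) (V : ℕ → F.W → Prop) (φ : Form) (v : (F.gen u).W) :
    (F.gen u).sat (fun n a => V n a.1) v φ ↔ F.sat V v.1 φ := by
  induction φ generalizing v with
  | var n => rfl
  | bot => rfl
  | imp φ ψ ihφ ihψ => exact imp_congr (ihφ v) (ihψ v)
  | box φ ih =>
    exact ⟨fun h y hy => (ih ⟨y, v.2.tail hy⟩).mp (h ⟨y, v.2.tail hy⟩ hy),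
      fun h y hy => (ih y).mpr (h y.1 hy)⟩

/-- The fresh point is invisible from the old worlds, so its valuation is irrelevant. -/
theorem sat_ptext_some (F : Frame) (w : F.W) (V : ℕ → F.W → Prop) (φ : Form) (x : F.W) :
    (F.ptext w).sat (fun n a => a.elim True (V n)) (some x) φ ↔ F.sat V x φ := by
  induction φ generalizing x with
  | var n => rfl
  | bot => rfl
  | imp φ ψ ihφ ihψ => exact imp_congr (ihφ x) (ihψ x)
  | box φ ih =>
    refine ⟨fun h y hy => (ih y).mp (h (some y) hy), fun h y hy => ?_⟩
    cases y with
    | none => exact hy.elim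
    | some z => exact (ih z).mpr (h z hy)

end Frame

theorem localConseq_box_of_globalConseq {C : Frame → Prop}
    (htrans : ∀ F, C F → Transitive F.R) (hgen : closedGen C) {Γ : Set Form} {φ : Form}
    (hg : globalConseq C Γ φ) : localConseq C (Form.box '' Γ) (.box φ) := by
  intro F hF V w hΓ u hwu
  have : IsTrans F.W F.R := ⟨htrans F hF⟩
  have hΓ_gen : ∀ ψ ∈ Γ, ∀ v : (F.gen u).W, (F.gen u).sat (fun n a => V n a.1) v ψ :=
    fun ψ hψ v => (F.sat_gen u V ψ v).mpr <|
      hΓ _ ⟨ψ, hψ, rfl⟩ v.1 (Relation.rel_of_rel_of_reflTransGen hwu v.2)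
  exact (F.sat_gen u V φ ⟨u, .refl⟩).mp <|
    hg (F.gen u) (hgen F hF u) _ hΓ_gen ⟨u, .refl⟩

theorem globalConseq_of_localConseq_box {C : Frame → Prop} (hext : closedPtext C)
    {Γ : Set Form} {φ : Form} (hl : localConseq C (Form.box '' Γ) (.box φ)) :
    globalConseq C Γ φ := by
  intro F hF V hΓ w
  by_cases hww : F.R w w
  · exact hl F hF V w (Set.forall_mem_image.mpr fun ψ hψ y _ => hΓ ψ hψ y) w hww
  · have hΓ_ext : ∀ ψ ∈ Form.box '' Γ,
        (F.ptext w).sat (fun n a => a.elim True (V n)) none ψ := by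
      rintro _ ⟨ψ, hψ, rfl⟩ (_ | y) hy
      · exact hy.elim
      · exact (F.sat_ptext_some w V ψ y).mpr (hΓ ψ hψ y)
    exact (F.sat_ptext_some w V φ w).mp <|
      hl (F.ptext w) (hext F hF w hww) _ none hΓ_ext (some w) (Or.inl rfl)

/-- for classes of transitive frames closed under point-generated
subframes and irreflexive point extension, Γ ⊨^g_F φ iff □Γ ⊨_F □φ. -/
theorem stmt7 (C : Frame → Prop)
    (htrans : ∀ F, C F → Transitive F.R)
    (hgen : closedGen C) (hext : closedPtext C)
    (Γ : Set Form) (φ : Form) :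
    globalConseq C Γ φ ↔ localConseq C (Form.box '' Γ) (.box φ) :=
  ⟨localConseq_box_of_globalConseq htrans hgen, globalConseq_of_localConseq_box hext⟩
end

section
/- For any class of Kripke frames F: ◇φ ⊨^g_F φ holds for all formulas φ if and only if every frame (W,R) in F is globally isolated, i.e., satisfies ∀x ∃y ∀z (Ryz → z = x). -/
/-! If every successor of `y` is `x`, then `◇φ` at `y` can only be witnessed at `x`, so global
`◇φ` forces `φ` at every world. Conversely, if some `x` is not isolated in this sense, every world
has a successor other than `x`; the valuation making `p` true everywhere except at `x` then makes
`◇p` globally true while `p` fails at `x`. -/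

theorem globalConseq_singleton {C : Frame → Prop} {ψ φ : Form} :
    globalConseq C {ψ} φ ↔
      ∀ F, C F → ∀ V : ℕ → F.W → Prop, (∀ w, F.sat V w ψ) → ∀ w, F.sat V w φ := by
  simp only [globalConseq, Set.mem_singleton_iff, forall_eq]

namespace Frame

variable (F : Frame) {V : ℕ → F.W → Prop}

theorem sat_dia {w : F.W} {φ : Form} :
    F.sat V w φ.dia ↔ ∃ u, F.R w u ∧ F.sat V u φ := by
  simp only [Form.dia, Form.neg, sat, imp_false, not_forall, not_not, exists_prop]

theorem sat_of_forall_sat_dia {φ : Form} {x y : F.W} (hy : ∀ z, F.R y z → z = x)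
    (h : ∀ w, F.sat V w φ.dia) : F.sat V x φ := by
  obtain ⟨u, hyu, hu⟩ := F.sat_dia.1 (h y)
  exact hy u hyu ▸ hu

end Frame

/-- ◇φ ⊨^g_F φ for all φ iff every frame in F is globally
isolated: ∀x ∃y ∀z (Ryz → z = x). -/
theorem stmt12 (C : Frame → Prop) :
    (∀ φ : Form, globalConseq C {Form.dia φ} φ) ↔
      ∀ F, C F → ∀ x : F.W, ∃ y : F.W, ∀ z : F.W, F.R y z → z = x := by
  constructor
  · intro h F hF x
    by_contra! hne
    exact globalConseq_singleton.1 (h (.var 0)) F hF (fun _ v => v ≠ x)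
      (fun w => F.sat_dia.2 (hne w)) x rfl
  · intro h φ
    rw [globalConseq_singleton]
    intro F hF V hdia x
    obtain ⟨y, hy⟩ := h F hF x
    exact F.sat_of_forall_sat_dia hy hdia
end

section
/- Let F be any class of reflexive and transitive Kripke frames. If Γ ∪ {α} ⊨^g_F φ and Γ ∪ {β} ⊨^g_F ψ, then Γ ∪ {□α ∨ □β} ⊨^g_F □φ ∨ □ψ. -/
/-
Under □α every successor u of w sees only α-worlds: by transitivity, everything reachable from u
is an R-successor of w. Hence the submodel generated by u validates Γ ∪ {α}, so φ holds at u, i.e.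
□α implies □φ at w; likewise □β implies □ψ. The dilemma at w then follows propositionally.
-/

theorem Frame.sat_gen_s19 (F : Frame) (w : F.W) (V : ℕ → F.W → Prop) (χ : Form) (v : (F.gen w).W) :
    (F.gen w).sat (fun n a => V n a.1) v χ ↔ F.sat V v.1 χ := by
  induction χ generalizing v with
  | var n => rfl
  | bot => rfl
  | imp a b iha ihb => exact imp_congr (iha v) (ihb v)
  | box a ih =>
    constructor
    · intro h u hvu
      exact (ih ⟨u, v.2.tail hvu⟩).1 (h ⟨u, v.2.tail hvu⟩ hvu)
    · intro h u hvu
      exact (ih u).2 (h u.1 hvu)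

theorem globalConseq.sat_of_forall_reachable {C : Frame → Prop} (hgen : closedGen C)
    {Δ : Set Form} {ξ : Form} (h : globalConseq C Δ ξ) {F : Frame} (hF : C F)
    (V : ℕ → F.W → Prop) (u : F.W)
    (hΔ : ∀ χ ∈ Δ, ∀ v, Relation.ReflTransGen F.R u v → F.sat V v χ) :
    F.sat V u ξ := by
  have hξ := h (F.gen u) (hgen F hF u) (fun n a => V n a.1)
    (fun χ hχ v => (F.sat_gen_s19 u V χ v).2 (hΔ χ hχ v.1 v.2))
  exact (F.sat_gen_s19 u V ξ ⟨u, .refl⟩).1 (hξ ⟨u, .refl⟩)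

theorem globalConseq.sat_box {C : Frame → Prop} (hgen : closedGen C) {Γ : Set Form}
    {θ ξ : Form} (h : globalConseq C (insert θ Γ) ξ) {F : Frame} (hF : C F)
    [IsTrans F.W F.R] (V : ℕ → F.W → Prop) (hΓ : ∀ χ ∈ Γ, ∀ v, F.sat V v χ)
    {w : F.W} (hθ : F.sat V w (.box θ)) : F.sat V w (.box ξ) := by
  intro u hwu
  refine h.sat_of_forall_reachable hgen hF V u fun χ hχ v huv => ?_
  rcases Set.mem_insert_iff.1 hχ with rfl | hχΓ
  · exact hθ v (Relation.transGen_eq_self (r := F.R) ▸ .head' hwu huv)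
  · exact hΓ χ hχΓ v

theorem stmt19_general (C : Frame → Prop)
    (htrans : ∀ F, C F → Transitive F.R)
    (hgen : closedGen C)
    (Γ : Set Form) (α β φ ψ : Form)
    (h1 : globalConseq C (insert α Γ) φ)
    (h2 : globalConseq C (insert β Γ) ψ) :
    globalConseq C (insert (Form.or (.box α) (.box β)) Γ)
      (Form.or (.box φ) (.box ψ)) := by
  intro F hF V hΔ w hnotφ
  have : IsTrans F.W F.R := ⟨htrans F hF⟩
  have hΓ : ∀ χ ∈ Γ, ∀ v, F.sat V v χ := fun χ hχ => hΔ χ (Set.mem_insert_of_mem _ hχ)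
  have hαβ : F.sat V w (Form.or (.box α) (.box β)) := hΔ _ (Set.mem_insert _ _) w
  exact h2.sat_box hgen hF V hΓ
    (hαβ fun hα => hnotφ (h1.sat_box hgen hF V hΓ hα))

/-- the global modal constructive dilemma over reflexive
transitive frames (closed under point-generated subframes). -/
theorem stmt19 (C : Frame → Prop)
    (hrefl : ∀ F, C F → Reflexive F.R)
    (htrans : ∀ F, C F → Transitive F.R)
    (hgen : closedGen C)
    (Γ : Set Form) (α β φ ψ : Form)
    (h1 : globalConseq C (insert α Γ) φ)
    (h2 : globalConseq C (insert β Γ) ψ) :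
    globalConseq C (insert (Form.or (.box α) (.box β)) Γ)
      (Form.or (.box φ) (.box ψ)) :=
  stmt19_general C htrans hgen Γ α β φ ψ h1 h2
end
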